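/- arXiv:2502.09979 — 3 statements merged into one kernel-verified Lean document; each statement's English description precedes it below -/
import Mathlib

section
/- Let ϕ ∈ [−π,π] and φ ∈ [0,π]. Then for the points x(φ,0) and x(φ,ϕ) on the unit sphere one has d(x(φ,0), x(φ,ϕ)) = arccos(1 + (cos ϕ − 1) sin²φ) ≥ √(1 − ϕ²/12) · |ϕ| · sinφ. -/
open MeasureTheory Real Set Filter
open scoped BigOperators Classical

noncomputable section

abbrev E3 : Type := EuclideanSpace ℝ (Fin 3)

/-- The unit sphere `S²` as a subset of `ℝ³`. -/
def S2 : Set E3 := Metric.sphere 0 1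

/-- Geodesic distance `d(x,y) = arccos ⟨x,y⟩₂`. -/
def gd (x y : E3) : ℝ := Real.arccos (inner ℝ x y)

/-- Distance from a point to a set, `d(x,B) = inf_{b ∈ B} d(x,b)`. -/
def gdSet (x : E3) (B : Set E3) : ℝ := sInf (gd x '' B)

/-- Spherical cap `C(z,φ) = {x ∈ S² : d(x,z) < φ}`. -/
def cap (z : E3) (φc : ℝ) : Set E3 := {x | x ∈ S2 ∧ gd x z < φc}

/-- Boundary circle `∂C(z,φ) = {x ∈ S² : d(x,z) = φ}` of a spherical cap. -/
def capBd (z : E3) (φc : ℝ) : Set E3 := {x | x ∈ S2 ∧ gd x z = φc}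

/-- Boundary of a subset of the sphere, relative to the sphere. -/
def sphFrontier (A : Set E3) : Set E3 := closure A ∩ closure (S2 \ A)

/-- Cross product in `ℝ³`. -/
def cross3 (u v : E3) : E3 :=
  (EuclideanSpace.equiv (Fin 3) ℝ).symm
    ![u 1 * v 2 - u 2 * v 1, u 2 * v 0 - u 0 * v 2, u 0 * v 1 - u 1 * v 0]

/-- Counterclockwise rotation `R_x(ξ)` by an angle `ξ` about the axis `x`
(Rodrigues formula), applied to `v`. -/
def rotAxis (x : E3) (ξ : ℝ) (v : E3) : E3 :=
  Real.cos ξ • v + Real.sin ξ • cross3 x v + ((1 - Real.cos ξ) * (inner ℝ x v : ℝ)) • x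

/-- `R ∈ SO(3)`. -/
def SO3 (R : Matrix (Fin 3) (Fin 3) ℝ) : Prop := R * R.transpose = 1 ∧ R.det = 1

/-- Action of a `3×3` matrix on `ℝ³`. -/
def act (R : Matrix (Fin 3) (Fin 3) ℝ) (y : E3) : E3 :=
  (EuclideanSpace.equiv (Fin 3) ℝ).symm (R.mulVec (EuclideanSpace.equiv (Fin 3) ℝ y))

/-- Standard basis vectors of `ℝ³` (`e3v 0 = e₁`, `e3v 1 = e₂`, `e3v 2 = e₃`). -/
def e3v (i : Fin 3) : E3 := EuclideanSpace.single i 1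

/-- `(x,r)` belongs to the unit tangent bundle `UTS²`:
`x ∈ S²`, `r ∈ T_x S²` and `‖r‖₂ = 1`. -/
def UT (x r : E3) : Prop := x ∈ S2 ∧ ‖r‖ = 1 ∧ (inner ℝ x r : ℝ) = 0

/-- `R` is the rotation matrix `R(x,r)` corresponding to `(x,r) ∈ UTS²`,
i.e. `R ∈ SO(3)`, `R e₃ = x` and `R e₁ = r`. -/
def IsRotOf (R : Matrix (Fin 3) (Fin 3) ℝ) (x r : E3) : Prop :=
  SO3 R ∧ act R (e3v 2) = x ∧ act R (e3v 0) = r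

/-- Legendre polynomial via the Rodrigues formula. -/
def legendreP (n : ℕ) (x : ℝ) : ℝ :=
  (1 / (2 ^ n * n.factorial)) * iteratedDeriv n (fun y => (y ^ 2 - 1) ^ n) x

/-- Factorial of an integer (`0! ` for negative arguments, via `toNat`). -/
def intFact (m : ℤ) : ℕ := m.toNat.factorial

/-- Associated Legendre functions `P_n^k`, for `k : ℤ`. -/
def assocLegendre (n : ℕ) (k : ℤ) (x : ℝ) : ℝ :=
  if 0 ≤ k then
    Real.rpow (1 - x ^ 2) ((k : ℝ) / 2) * iteratedDeriv k.toNat (legendreP n) x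
  else
    (-1 : ℝ) ^ k.natAbs * ((intFact ((n : ℤ) + k) : ℝ) / (intFact ((n : ℤ) - k) : ℝ)) *
      (Real.rpow (1 - x ^ 2) ((k.natAbs : ℝ) / 2) * iteratedDeriv k.natAbs (legendreP n) x)

/-- Spherical harmonic `Y_n^k(θ,φ)`. -/
def sphHarm (n : ℕ) (k : ℤ) (θ φ : ℝ) : ℂ :=
  ((-1 : ℂ) ^ k) *
    (Real.sqrt ((2 * n + 1) / (4 * π) *
      ((intFact ((n : ℤ) - k) : ℝ) / (intFact ((n : ℤ) + k) : ℝ))) : ℂ) *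
    (assocLegendre n k (Real.cos θ) : ℂ) * Complex.exp (Complex.I * (k : ℂ) * (φ : ℂ))

/-- The factor `η` (depending on the parity of `K-1`). -/
def etaK (K : ℕ) : ℂ := if Even (K - 1) then 1 else Complex.I

/-- The factor `ν` (depending on the parity of `K+k`). -/
def nuK (K : ℕ) (k : ℤ) : ℝ := if Odd ((K : ℤ) + k) then 1 else 0

/-- The exponent `p = p(K,n)`. -/
def pK (K n : ℕ) : ℕ := if Even (K + n) then min (K - 1) (n - 1) else min (K - 1) n

/-- The directionality component `ζ_{n,k}^K`. -/
def zetaC (K n : ℕ) (k : ℤ) : ℂ :=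
  if k.natAbs < K then
    etaK K * (nuK K k : ℂ) *
      (Real.sqrt ((1 / 2 ^ pK K n) *
        (Nat.choose (pK K n) ((((pK K n : ℤ) - k) / 2).toNat) : ℝ)) : ℂ)
  else 0

/-- `ζ_k^K`, the common value of `ζ_{n,k}^K` for `n ≥ K` (independent of such `n`). -/
def zetaInf (K : ℕ) (k : ℤ) : ℂ := zetaC K (2 * K) k

/-- The directionality function `χ_K(γ) = conj(η) Σ_{k=1-K}^{K-1} ζ_k^K e^{ikγ}`. -/
def chiK (K : ℕ) (γ : ℝ) : ℂ :=
  (starRingEnd ℂ) (etaK K) *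
    ∑ k ∈ Finset.Icc (1 - (K : ℤ)) ((K : ℤ) - 1),
      zetaInf K k * Complex.exp (Complex.I * (k : ℂ) * (γ : ℂ))

/-- The directional wavelet `Ψ_K^N` in spherical coordinates. -/
def Psi (κ : ℝ → ℝ) (K N : ℕ) (θ φ : ℝ) : ℂ :=
  ∑' n : ℕ, ∑ k ∈ Finset.Icc (-(n : ℤ)) (n : ℤ),
    (Real.sqrt ((2 * n + 1) / (8 * π ^ 2)) : ℂ) * (κ ((n : ℝ) / (N : ℝ)) : ℂ) *
      zetaC K n k * sphHarm n k θ φ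

/-- Latitude `θ ∈ [0,π]` of a point on the sphere. -/
def sphTheta (y : E3) : ℝ := Real.arccos (y 2)

/-- Longitude `φ ∈ [0,2π)` of a point on the sphere. -/
def sphPhi (y : E3) : ℝ :=
  if Complex.arg ((y 0 : ℂ) + (y 1 : ℂ) * Complex.I) < 0 then
    Complex.arg ((y 0 : ℂ) + (y 1 : ℂ) * Complex.I) + 2 * π
  else Complex.arg ((y 0 : ℂ) + (y 1 : ℂ) * Complex.I)

/-- The directional wavelet `Ψ_K^N` as a function on `ℝ³ ⊇ S²`. -/
def PsiS (κ : ℝ → ℝ) (K N : ℕ) (y : E3) : ℂ := Psi κ K N (sphTheta y) (sphPhi y)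

/-- The surface measure `ω` on the unit sphere `S²`. -/
def ωS : Measure (Metric.sphere (0 : E3) 1) := MeasureTheory.volume.toSphere

/-- The window function has nonempty support contained in `[1/2, 2]`. -/
def WindowSupp (κ : ℝ → ℝ) : Prop :=
  Function.support κ ⊆ Icc (1 / 2) 2 ∧ (Function.support κ).Nonempty

/-- Frame coefficient `⟨f, D(x,r)Ψ_K^N⟩ = ∫_{S²} f(y) conj(Ψ_K^N(R(x,r)⁻¹y)) dω(y)`,
where `R` is the rotation corresponding to `(x,r)` (so `R⁻¹ = Rᵀ`). -/
def fcoef (κ : ℝ → ℝ) (K N : ℕ) (f : E3 → ℂ) (R : Matrix (Fin 3) (Fin 3) ℝ) : ℂ :=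
  ∫ y : Metric.sphere (0 : E3) 1,
    f (y : E3) * (starRingEnd ℂ) (PsiS κ K N (act R.transpose (y : E3))) ∂ωS

/-- Frame coefficient `⟨1_A, D(x,r)Ψ_K^N⟩`. -/
def wcoef (κ : ℝ → ℝ) (K N : ℕ) (A : Set E3) (R : Matrix (Fin 3) (Fin 3) ℝ) : ℂ :=
  fcoef κ K N (A.indicator fun _ => 1) R

/-- The infimum `φ* = inf_{t ∈ [a,b]} arcsin(‖v''(t)‖₂⁻¹)`. -/
def phiStar (v : ℝ → E3) (a b : ℝ) : ℝ :=
  sInf ((fun t => Real.arcsin (‖deriv (deriv v) t‖⁻¹)) '' Icc a b)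

/-- `sup_{t ∈ [a,b]} ‖v'''(t)‖₂`. -/
def supV3 (v : ℝ → E3) (a b : ℝ) : ℝ :=
  sSup ((fun t => ‖deriv (deriv (deriv v)) t‖) '' Icc a b)

/-- The geometric situation of Section 4: a region `A ⊆ S²` whose boundary `∂A` is the image
of a closed unit-speed curve `v` of length `L` (injective except `v 0 = v L`), positively
oriented, which is `C³` on `[a,b] ⊆ [0,L]`, together with the closeness assumptions (4.1)
and a fixed `δ ∈ (0,1]`. -/
structure EdgeSetup where
  A : Set E3
  L : ℝ
  v : ℝ → E3
  a : ℝ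
  b : ℝ
  δ : ℝ
  hA : A ⊆ S2
  hL : 0 < L
  hv_mem : ∀ t ∈ Icc (0 : ℝ) L, v t ∈ S2
  hv_smooth : ContDiffOn ℝ 1 v (Icc 0 L)
  hv_unit : ∀ t ∈ Icc (0 : ℝ) L, ‖deriv v t‖ = 1
  hv_closed : v 0 = v L
  hv_inj : ∀ s ∈ Icc (0 : ℝ) L, ∀ t ∈ Icc (0 : ℝ) L, v s = v t →
      s = t ∨ (s = 0 ∧ t = L) ∨ (s = L ∧ t = 0)
  hbd : sphFrontier A = v '' Icc 0 L
  ha : 0 ≤ a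
  hab : a < b
  hb : b ≤ L
  hC3 : ContDiffOn ℝ 3 v (Icc a b)
  horient : ∀ p ∈ Icc a b, ∀ᶠ ε in nhdsWithin (0 : ℝ) (Ioi 0),
      ‖v p + ε • rotAxis (v p) (π / 2) (deriv v p)‖⁻¹ •
        (v p + ε • rotAxis (v p) (π / 2) (deriv v p)) ∈ A
  hδpos : 0 < δ
  hδ1 : δ ≤ 1
  hclose1 : ∀ t₁ ∈ Icc a b, ∀ t₂ ∈ Icc a b,
      ‖v t₁ - v t₂‖ ≤ (1 - Real.cos (phiStar v a b)) / 2
  hclose2 : ∀ t₁ ∈ Icc a b, ∀ t₂ ∈ Icc a b,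
      ‖deriv v t₁ - deriv v t₂‖ ≤ 1 / 4 - (1 + Real.cos (phiStar v a b)) ^ 2 / 16

/-- The quantity `d_δ` of equation (4.2). -/
def dDelta (S : EdgeSetup) : ℝ :=
  min (S.δ / 5 * Real.sin (phiStar S.v S.a S.b / 2))
    (sInf {u : ℝ | ∃ t ∈ Icc (S.a + S.δ) (S.b - S.δ), ∃ s ∈ Icc 0 S.L \ Ioo S.a S.b,
        u = gd (S.v t) (S.v s)})

/-- The neighborhood `N(v([a,b]_δ))` of the curve segment `v([a,b]_δ)`: the points `x ∈ S²`
with `d(x,∂A) = d(x, v([a,b]_δ))` and `d(x,∂A) ≤ φ*/4`. -/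
def nbhd (S : EdgeSetup) : Set E3 :=
  {x | x ∈ S2 ∧
    gdSet x (sphFrontier S.A) = gdSet x (S.v '' Icc (S.a + S.δ) (S.b - S.δ)) ∧
    gdSet x (sphFrontier S.A) ≤ phiStar S.v S.a S.b / 4}

/-- `C(z,φc)` is the osculating spherical cap of `∂A` at `v(p)`: its boundary circle admits an
arc-length parameterization `u` on `[-π‖v''(p)‖⁻¹, π‖v''(p)‖⁻¹]` (so `∂C` has length
`2π‖v''(p)‖⁻¹`) which agrees with `v` at `p` up to second order, and `u` is positively
oriented with respect to `A`. -/
def IsOscCap (A : Set E3) (v : ℝ → E3) (p : ℝ) (z : E3) (φc : ℝ) : Prop :=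
  z ∈ S2 ∧ φc ∈ Ioo 0 π ∧
  ∃ u : ℝ → E3,
    ContDiff ℝ 2 u ∧
    (∀ t ∈ Icc (-(π * ‖deriv (deriv v) p‖⁻¹)) (π * ‖deriv (deriv v) p‖⁻¹),
      ‖deriv u t‖ = 1) ∧
    u '' Icc (-(π * ‖deriv (deriv v) p‖⁻¹)) (π * ‖deriv (deriv v) p‖⁻¹) = capBd z φc ∧
    Set.InjOn u (Ico (-(π * ‖deriv (deriv v) p‖⁻¹)) (π * ‖deriv (deriv v) p‖⁻¹)) ∧
    u 0 = v p ∧ deriv u 0 = deriv v p ∧ deriv (deriv u) 0 = deriv (deriv v) p ∧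
    ∀ ε > 0, ∃ w ∈ A ∩ cap z φc, (inner ℝ w (deriv v p) : ℝ) = 0 ∧ gd w (v p) < ε

end
/-- The point `x(θ,φ)` on the unit sphere with latitude `θ` and longitude `φ`. -/
noncomputable def spt (θ φ : ℝ) : E3 :=
  (EuclideanSpace.equiv (Fin 3) ℝ).symm
    ![Real.sin θ * Real.cos φ, Real.sin θ * Real.sin φ, Real.cos θ]

/-! The two points have inner product `1 + (cos ϕ - 1) sin² φ = 1 - t² / 2` with
`t = √(2 (1 - cos ϕ)) |sin φ| ≤ 2 < π`. Since `1 - t² / 2 ≤ cos t`, the distance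
`arccos (1 - t² / 2)` is at least `t`, and the Taylor bound `cos ϕ ≤ 1 - ϕ² / 2 + ϕ⁴ / 24`
gives `ϕ² (1 - ϕ² / 12) ≤ 2 (1 - cos ϕ)`. -/

lemma inner_spt (θ₁ φ₁ θ₂ φ₂ : ℝ) :
    (inner ℝ (spt θ₁ φ₁) (spt θ₂ φ₂) : ℝ) =
      sin θ₁ * sin θ₂ * cos (φ₁ - φ₂) + cos θ₁ * cos θ₂ := by
  simp [spt, PiLp.inner_apply, Fin.sum_univ_three, Real.cos_sub]
  ring

lemma Real.cos_le_one_sub_sq_div_two_add_pow_four_div_24 (x : ℝ) :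
    cos x ≤ 1 - x ^ 2 / 2 + x ^ 4 / 24 := by
  wlog hx : 0 ≤ x
  · simpa [Even.neg_pow (by decide : Even 4)] using this (-x) (by linarith)
  let f (t : ℝ) : ℝ := 1 - t ^ 2 / 2 + t ^ 4 / 24 - cos t
  have hderiv (t : ℝ) : deriv f t = sin t - (t - t ^ 3 / 6) := by
    simp (disch := fun_prop) [f]
    ring
  have hmono : MonotoneOn f (Ici 0) := by
    apply monotoneOn_of_deriv_nonneg (convex_Ici 0) (by fun_prop) (by fun_prop)
    intro t ht
    rw [interior_Ici] at ht
    rw [hderiv, sub_nonneg]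
    exact Real.sin_ge_sub_cube ht.le
  have := hmono self_mem_Ici hx hx
  simp only [f, Real.cos_zero] at this
  linarith

lemma sq_mul_one_sub_sq_div_twelve_le (x : ℝ) :
    x ^ 2 * (1 - x ^ 2 / 12) ≤ 2 * (1 - cos x) := by
  linarith [Real.cos_le_one_sub_sq_div_two_add_pow_four_div_24 x]

lemma sqrt_one_sub_sq_div_twelve_mul_abs_le (x : ℝ) :
    √(1 - x ^ 2 / 12) * |x| ≤ √(2 * (1 - cos x)) := by
  rw [← Real.sqrt_sq_eq_abs, ← Real.sqrt_mul' _ (sq_nonneg x), mul_comm]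
  exact Real.sqrt_le_sqrt (sq_mul_one_sub_sq_div_twelve_le x)

lemma le_arccos_one_sub_sq_div_two {t : ℝ} (ht₀ : 0 ≤ t) (htπ : t ≤ π) :
    t ≤ arccos (1 - t ^ 2 / 2) :=
  calc t = arccos (cos t) := (Real.arccos_cos ht₀ htπ).symm
    _ ≤ arccos (1 - t ^ 2 / 2) := Real.arccos_le_arccos Real.one_sub_sq_div_two_le_cos

theorem equal_latitude_distance_general
    (ϕ : ℝ) (φ : ℝ) :
    gd (spt φ 0) (spt φ ϕ) = Real.arccos (1 + (Real.cos ϕ - 1) * Real.sin φ ^ 2) ∧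
    Real.sqrt (1 - ϕ ^ 2 / 12) * |ϕ| * Real.sin φ ≤ gd (spt φ 0) (spt φ ϕ) := by
  have hgd : gd (spt φ 0) (spt φ ϕ) = arccos (1 + (cos ϕ - 1) * sin φ ^ 2) := by
    rw [gd, inner_spt, zero_sub, Real.cos_neg]
    congr 1
    linear_combination Real.sin_sq_add_cos_sq φ
  refine ⟨hgd, ?_⟩
  set t := √(2 * (1 - cos ϕ)) * |sin φ| with ht
  have ht_sq : t ^ 2 = 2 * (1 - cos ϕ) * sin φ ^ 2 := by
    rw [ht, mul_pow, sq_abs, Real.sq_sqrt (by linarith [Real.cos_le_one ϕ])]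
  have ht_le_two : t ≤ 2 := by
    nlinarith [Real.neg_one_le_cos ϕ, Real.sin_sq_le_one φ, sq_nonneg (sin φ)]
  calc √(1 - ϕ ^ 2 / 12) * |ϕ| * sin φ
      ≤ √(1 - ϕ ^ 2 / 12) * |ϕ| * |sin φ| := by gcongr; exact le_abs_self _
    _ ≤ t := mul_le_mul_of_nonneg_right (sqrt_one_sub_sq_div_twelve_mul_abs_le ϕ) (abs_nonneg _)
    _ ≤ arccos (1 - t ^ 2 / 2) :=
      le_arccos_one_sub_sq_div_two (by positivity) (ht_le_two.trans Real.two_le_pi)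
    _ = gd (spt φ 0) (spt φ ϕ) := by rw [hgd, ht_sq]; ring_nf

/-- Lemma 4.4, first part: distance between two points of equal latitude. -/
theorem equal_latitude_distance
    (ϕ : ℝ) (hϕ : ϕ ∈ Icc (-π) π) (φ : ℝ) (hφ : φ ∈ Icc (0 : ℝ) π) :
    gd (spt φ 0) (spt φ ϕ) = Real.arccos (1 + (Real.cos ϕ - 1) * Real.sin φ ^ 2) ∧
    Real.sqrt (1 - ϕ ^ 2 / 12) * |ϕ| * Real.sin φ ≤ gd (spt φ 0) (spt φ ϕ) :=
  equal_latitude_distance_general ϕ φ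
end

section
/- Let φ ∈ (0,π). Then the function ϕ ↦ d(x(φ,0), x(φ,ϕ)) is even on [−π,π] and strictly increasing on [0,π], and for every ϕ ∈ [−π,π] one has |ϕ| ≤ 5 d(x(φ,0), x(φ,ϕ)) / (2 sinφ). -/
open MeasureTheory Real Set Filter
open scoped BigOperators Classical

/-! Along the latitude circle at polar angle `θ`, `1 - cos d = sin² θ (1 - cos ϕ)` where `d` is the
geodesic distance between the points at longitudes `0` and `ϕ`. Evenness and monotonicity in `ϕ`
follow at once. For the lower bound, compare the two sides with the elementary estimates
`1 - cos d ≤ d² / 2` and `1 - cos ϕ ≥ 2 ϕ² / π²` (valid for `|ϕ| ≤ π`), and use `π ≤ 5`. -/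

lemma inner_spt_zero_spt (θ ϕ : ℝ) :
    inner ℝ (spt θ 0) (spt θ ϕ) = 1 - sin θ ^ 2 * (1 - cos ϕ) := by
  simp [spt, PiLp.inner_apply, Fin.sum_univ_three]
  linear_combination sin_sq_add_cos_sq θ

lemma one_sub_sin_sq_mul_one_sub_cos_mem_Icc (θ ϕ : ℝ) :
    1 - sin θ ^ 2 * (1 - cos ϕ) ∈ Icc (-1) 1 := by
  have hs := sin_sq_le_one θ
  constructor <;> nlinarith [sq_nonneg (sin θ), cos_le_one ϕ, neg_one_le_cos ϕ]

lemma gd_spt_zero_spt (θ ϕ : ℝ) :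
    gd (spt θ 0) (spt θ ϕ) = arccos (1 - sin θ ^ 2 * (1 - cos ϕ)) := by
  rw [gd, inner_spt_zero_spt]

lemma gd_spt_zero_spt_neg (θ ϕ : ℝ) :
    gd (spt θ 0) (spt θ (-ϕ)) = gd (spt θ 0) (spt θ ϕ) := by
  rw [gd_spt_zero_spt, gd_spt_zero_spt, cos_neg]

lemma one_sub_cos_gd_spt_zero_spt (θ ϕ : ℝ) :
    1 - cos (gd (spt θ 0) (spt θ ϕ)) = sin θ ^ 2 * (1 - cos ϕ) := by
  obtain ⟨h₁, h₂⟩ := one_sub_sin_sq_mul_one_sub_cos_mem_Icc θ ϕ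
  rw [gd_spt_zero_spt, cos_arccos h₁ h₂]
  ring

lemma strictMonoOn_gd_spt_zero_spt {θ : ℝ} (hθ : sin θ ≠ 0) :
    StrictMonoOn (fun ϕ => gd (spt θ 0) (spt θ ϕ)) (Icc 0 π) := by
  have hinner : StrictAntiOn (fun ϕ => 1 - sin θ ^ 2 * (1 - cos ϕ)) (Icc 0 π) :=
    fun x hx y hy hxy => by
      have hcos := strictAntiOn_cos hx hy hxy
      have hsin := sq_pos_of_ne_zero hθ
      dsimp only
      nlinarith
  simpa only [Function.comp_def, gd_spt_zero_spt] using
    strictAntiOn_arccos.comp hinner fun ϕ _ => one_sub_sin_sq_mul_one_sub_cos_mem_Icc θ ϕ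

lemma two_mul_sin_mul_abs_le_pi_mul_gd_spt {θ ϕ : ℝ} (hθ : 0 ≤ sin θ) (hϕ : |ϕ| ≤ π) :
    2 * sin θ * |ϕ| ≤ π * gd (spt θ 0) (spt θ ϕ) := by
  have hd : 0 ≤ gd (spt θ 0) (spt θ ϕ) := arccos_nonneg _
  have hcos_d := one_sub_sq_div_two_le_cos (x := gd (spt θ 0) (spt θ ϕ))
  have hcos_ϕ := cos_le_one_sub_mul_cos_sq hϕ
  have hcos := one_sub_cos_gd_spt_zero_spt θ ϕ
  generalize gd (spt θ 0) (spt θ ϕ) = d at *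
  have hcos_ϕ' : 2 * ϕ ^ 2 ≤ π ^ 2 * (1 - cos ϕ) := by
    field_simp at hcos_ϕ
    linarith
  have key : sin θ ^ 2 * (2 * ϕ ^ 2) ≤ π ^ 2 * (d ^ 2 / 2) :=
    calc sin θ ^ 2 * (2 * ϕ ^ 2) ≤ sin θ ^ 2 * (π ^ 2 * (1 - cos ϕ)) := by gcongr
      _ = π ^ 2 * (1 - cos d) := by rw [hcos]; ring
      _ ≤ π ^ 2 * (d ^ 2 / 2) := by gcongr; linarith
  rw [← sq_le_sq₀ (by positivity) (by positivity)]
  nlinarith [sq_abs ϕ]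

/-- Lemma 4.4, second part: for `φ ∈ (0,π)`, the distance between two
points of equal latitude `φ` is an even, on `[0,π]` strictly increasing, function of the
longitude difference and dominates `|ϕ| 2 sin(φ) / 5`. -/
theorem equal_latitude_distance_monotone (φ : ℝ) (hφ : φ ∈ Ioo 0 π) :
    (∀ ϕ ∈ Icc (-π) π, gd (spt φ 0) (spt φ (-ϕ)) = gd (spt φ 0) (spt φ ϕ)) ∧
    StrictMonoOn (fun ϕ => gd (spt φ 0) (spt φ ϕ)) (Icc 0 π) ∧
    ∀ ϕ ∈ Icc (-π) π, |ϕ| ≤ 5 * gd (spt φ 0) (spt φ ϕ) / (2 * Real.sin φ) := by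
  have hsin : 0 < sin φ := sin_pos_of_pos_of_lt_pi hφ.1 hφ.2
  refine ⟨fun ϕ _ => gd_spt_zero_spt_neg φ ϕ, strictMonoOn_gd_spt_zero_spt hsin.ne', ?_⟩
  intro ϕ hϕ
  have hbound := two_mul_sin_mul_abs_le_pi_mul_gd_spt hsin.le (abs_le.2 hϕ)
  have hd : 0 ≤ gd (spt φ 0) (spt φ ϕ) := arccos_nonneg _
  rw [le_div_iff₀ (by positivity)]
  calc |ϕ| * (2 * sin φ) = 2 * sin φ * |ϕ| := by ring
    _ ≤ π * gd (spt φ 0) (spt φ ϕ) := hbound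
    _ ≤ 5 * gd (spt φ 0) (spt φ ϕ) := by gcongr; linarith [pi_le_four]
end

section
/- Let Ψ_K^N be the directional wavelet with a bounded window κ supported in [1/2,2]. Then there exists a constant c = c(κ,K) > 0 such that ‖Ψ_K^N‖_∞ = sup_{x∈S²} |Ψ_K^N(x)| ≤ c N² for all N ∈ ℕ. -/
open MeasureTheory Real Set Filter
open scoped BigOperators Classical

/-!
Only degrees `n ≤ 2N` and orders `|k| < K` contribute, so it suffices to bound
`|Y_n^k| ≤ C_K √(2n+1)` uniformly on the sphere. By the Rodrigues formula this is a bound on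
`(1 - x²)^{m/2} |(d/dx)^{n+m} (x² - 1)^n|` on `[-1, 1]`, which is Cauchy's estimate on the
circle of radius `s = √(1 - x²)` around `x`: there `|w² - 1| ≤ 2s`, whence the bound
`2^n (n+m)!`. The normalisation of `Y_n^k` then leaves `√((n+m)! (n-m)!) / n! ≤ (m+1)^{m/2}`.
-/

open Polynomial
open scoped Nat

theorem Polynomial.iteratedDeriv_aeval {R 𝕜 : Type*} [CommSemiring R]
    [NontriviallyNormedField 𝕜] [Algebra R 𝕜] (q : R[X]) (j : ℕ) :
    iteratedDeriv j (fun x : 𝕜 => aeval x q) = fun x => aeval x (derivative^[j] q) := by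
  induction j generalizing q with
  | zero => rfl
  | succ j ih =>
    have hderiv : _root_.deriv (fun x : 𝕜 => aeval x q) = fun x => aeval x (derivative q) := by
      funext x; exact Polynomial.deriv_aeval q
    rw [iteratedDeriv_succ', hderiv, ih, Function.iterate_succ_apply]

theorem Nat.ascFactorial_add_le_pow_mul (a d : ℕ) :
    ∀ k, (a + 1 + d).ascFactorial k ≤ (d + 1) ^ k * (a + 1).ascFactorial k
  | 0 => by simp
  | k + 1 => by
    rw [Nat.ascFactorial_succ, Nat.ascFactorial_succ, pow_succ]
    have hstep : a + 1 + d + k ≤ (d + 1) * (a + 1 + k) := by nlinarith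
    calc (a + 1 + d + k) * (a + 1 + d).ascFactorial k
        ≤ ((d + 1) * (a + 1 + k)) * ((d + 1) ^ k * (a + 1).ascFactorial k) :=
          Nat.mul_le_mul hstep (Nat.ascFactorial_add_le_pow_mul a d k)
      _ = (d + 1) ^ k * (d + 1) * ((a + 1 + k) * (a + 1).ascFactorial k) := by ring

theorem Nat.factorial_add_mul_factorial_sub_le {m n : ℕ} (h : m ≤ n) :
    (n + m)! * (n - m)! ≤ (m + 1) ^ m * n ! ^ 2 := by
  obtain ⟨l, rfl⟩ := Nat.exists_eq_add_of_le' h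
  calc (l + m + m)! * (l + m - m)!
      = (l + m)! * (l + 1 + m).ascFactorial m * l ! := by
        rw [Nat.add_sub_cancel, ← Nat.factorial_mul_ascFactorial (l + m) m, Nat.add_right_comm]
    _ ≤ (l + m)! * ((m + 1) ^ m * (l + 1).ascFactorial m) * l ! := by
      gcongr; exact Nat.ascFactorial_add_le_pow_mul l m m
    _ = (m + 1) ^ m * (l + m)! ^ 2 := by
      rw [← Nat.factorial_mul_ascFactorial l m]; ring

theorem Complex.norm_sq_sub_one_le_of_mem_sphere {c s : ℝ} (hcs : c ^ 2 + s ^ 2 = 1) {w : ℂ}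
    (hw : w ∈ Metric.sphere (c : ℂ) s) : ‖w ^ 2 - 1‖ ≤ 2 * s := by
  obtain ⟨u, rfl⟩ : ∃ u, w = c + u := ⟨w - c, by ring⟩
  have hu : ‖u‖ = s := by simpa using mem_sphere_iff_norm.mp hw
  -- `c ^ 2 - 1 = -s ^ 2 = -u * conj u`
  have hfactor : (c + u) ^ 2 - 1 = u * (2 * ((c : ℂ) + u.im * I)) := by
    have hs : (s : ℂ) ^ 2 = u * (starRingEnd ℂ) u := by
      rw [Complex.mul_conj, Complex.normSq_eq_norm_sq, hu]; push_cast; ring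
    have hc : (c : ℂ) ^ 2 + (s : ℂ) ^ 2 = 1 := by exact_mod_cast hcs
    have him : (u.im : ℂ) * I = (u - (starRingEnd ℂ) u) / 2 := by
      rw [Complex.sub_conj]; push_cast; ring
    rw [him]
    linear_combination hc - hs
  have him : u.im ^ 2 ≤ s ^ 2 := by
    rw [← hu, ← sq_abs]; gcongr; exact Complex.abs_im_le_norm u
  have hcI : ‖(c : ℂ) + u.im * I‖ ≤ 1 := by
    rw [Complex.norm_add_mul_I, Real.sqrt_le_one]; linarith
  rw [hfactor, norm_mul, hu, norm_mul, Complex.norm_two]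
  have hs0 : 0 ≤ s := hu ▸ norm_nonneg u
  nlinarith [norm_nonneg ((c : ℂ) + u.im * I)]

theorem abs_iterate_derivative_sq_sub_one_pow_eval_le {c s : ℝ} (hcs : c ^ 2 + s ^ 2 = 1)
    (hs : 0 < s) (n j : ℕ) :
    |(derivative^[j] ((X ^ 2 - 1) ^ n : ℝ[X])).eval c| ≤ j ! * (2 * s) ^ n / s ^ j := by
  have hcauchy := Complex.norm_iteratedDeriv_le_of_forall_mem_sphere_norm_le (c := (c : ℂ))
    (f := fun w : ℂ => aeval w ((X ^ 2 - 1) ^ n : ℝ[X])) j hs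
    (Polynomial.differentiable_aeval _).diffContOnCl fun w hw => by
      simp only [map_pow, map_sub, aeval_X, map_one, norm_pow]
      exact pow_le_pow_left₀ (norm_nonneg _) (Complex.norm_sq_sub_one_le_of_mem_sphere hcs hw) n
  have heval : aeval (c : ℂ) (derivative^[j] ((X ^ 2 - 1) ^ n : ℝ[X])) =
      (((derivative^[j] ((X ^ 2 - 1) ^ n : ℝ[X])).eval c : ℝ) : ℂ) :=
    Polynomial.aeval_ofReal _ c
  rw [Polynomial.iteratedDeriv_aeval] at hcauchy
  beta_reduce at hcauchy
  rwa [heval, Complex.norm_real, Real.norm_eq_abs] at hcauchy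

theorem sqrt_one_sub_sq_pow_mul_abs_iterate_derivative_le (n m : ℕ) {x : ℝ}
    (hx : x ∈ Icc (-1 : ℝ) 1) :
    √(1 - x ^ 2) ^ m * |(derivative^[n + m] ((X ^ 2 - 1) ^ n : ℝ[X])).eval x| ≤
      2 ^ n * (n + m)! := by
  rw [← closure_Ioo (by norm_num : (-1 : ℝ) ≠ 1)] at hx
  have hcont : Continuous fun y : ℝ =>
      √(1 - y ^ 2) ^ m * |(derivative^[n + m] ((X ^ 2 - 1) ^ n : ℝ[X])).eval y| := by
    have := (derivative^[n + m] ((X ^ 2 - 1) ^ n : ℝ[X])).continuous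
    fun_prop
  refine closure_minimal (fun y hy => ?_) (isClosed_le hcont continuous_const) hx
  have hy2 : 0 < 1 - y ^ 2 := by nlinarith [hy.1, hy.2]
  set s := √(1 - y ^ 2)
  have hs : 0 < s := Real.sqrt_pos.2 hy2
  have hcs : y ^ 2 + s ^ 2 = 1 := by rw [Real.sq_sqrt hy2.le]; ring
  have hD := abs_iterate_derivative_sq_sub_one_pow_eval_le hcs hs n (n + m)
  calc s ^ m * |(derivative^[n + m] ((X ^ 2 - 1) ^ n : ℝ[X])).eval y|
      ≤ s ^ m * ((n + m)! * (2 * s) ^ n / s ^ (n + m)) := by gcongr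
    _ = 2 ^ n * (n + m)! := by field_simp; ring

theorem iteratedDeriv_legendreP (n m : ℕ) (x : ℝ) :
    iteratedDeriv m (legendreP n) x =
      (derivative^[n + m] ((X ^ 2 - 1) ^ n : ℝ[X])).eval x / (2 ^ n * n !) := by
  have hP : legendreP n = fun x =>
      aeval x (C (1 / (2 ^ n * n ! : ℝ)) * derivative^[n] ((X ^ 2 - 1) ^ n : ℝ[X])) := by
    funext x
    have h := congrFun (Polynomial.iteratedDeriv_aeval (𝕜 := ℝ) ((X ^ 2 - 1) ^ n : ℝ[X]) n) x
    simp only [map_pow, map_sub, aeval_X, map_one] at h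
    simp [legendreP, h]
  rw [hP, Polynomial.iteratedDeriv_aeval, iterate_derivative_C_mul, ← Function.iterate_add_apply,
    Nat.add_comm m n]
  simp [div_eq_inv_mul]

theorem abs_iteratedDeriv_legendreP_le (n m : ℕ) {x : ℝ} (hx : x ∈ Icc (-1 : ℝ) 1) :
    √(1 - x ^ 2) ^ m * |iteratedDeriv m (legendreP n) x| ≤ (n + m)! / n ! := by
  have h2n : (0 : ℝ) < 2 ^ n * n ! := by positivity
  rw [iteratedDeriv_legendreP, abs_div, abs_of_pos h2n, ← mul_div_assoc]
  calc √(1 - x ^ 2) ^ m * |(derivative^[n + m] ((X ^ 2 - 1) ^ n : ℝ[X])).eval x| / (2 ^ n * n !)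
      ≤ 2 ^ n * (n + m)! / (2 ^ n * n !) :=
        div_le_div_of_nonneg_right (sqrt_one_sub_sq_pow_mul_abs_iterate_derivative_le n m hx)
          h2n.le
    _ = (n + m)! / n ! := by field_simp

theorem intFact_natCast_add (n m : ℕ) : intFact (n + m) = (n + m)! := by
  rw [intFact, ← Nat.cast_add, Int.toNat_natCast]

theorem abs_assocLegendre_le (n : ℕ) (k : ℤ) {x : ℝ} (hx : x ∈ Icc (-1 : ℝ) 1) :
    |assocLegendre n k x| ≤ intFact (n + k) / n ! := by
  have hpow (m : ℕ) : Real.rpow (1 - x ^ 2) ((m : ℝ) / 2) = √(1 - x ^ 2) ^ m := by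
    have h := Real.rpow_div_two_eq_sqrt (x := 1 - x ^ 2) m (by nlinarith [hx.1, hx.2])
    rwa [Real.rpow_natCast] at h
  rcases le_or_gt 0 k with hk | hk
  · obtain ⟨m, rfl⟩ := Int.eq_ofNat_of_zero_le hk
    rw [assocLegendre, if_pos hk, Int.cast_natCast, Int.toNat_natCast, hpow, abs_mul,
      abs_of_nonneg (by positivity), intFact_natCast_add]
    exact abs_iteratedDeriv_legendreP_le n m hx
  · obtain ⟨m, rfl⟩ := Int.exists_eq_neg_ofNat hk.le
    rw [assocLegendre, if_neg hk.not_ge, Int.natAbs_neg, Int.natAbs_natCast, hpow, sub_neg_eq_add,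
      intFact_natCast_add, abs_mul, abs_mul, abs_mul, abs_pow, abs_neg, abs_one, one_pow, one_mul,
      abs_of_nonneg (by positivity : (0 : ℝ) ≤ intFact (n + -(m : ℤ)) / (n + m)!),
      abs_of_nonneg (by positivity : (0 : ℝ) ≤ √(1 - x ^ 2) ^ m)]
    calc intFact (n + -(m : ℤ)) / ((n + m)! : ℝ) *
          (√(1 - x ^ 2) ^ m * |iteratedDeriv m (legendreP n) x|)
        ≤ intFact (n + -(m : ℤ)) / ((n + m)! : ℝ) * ((n + m)! / n !) := by
          gcongr; exact abs_iteratedDeriv_legendreP_le n m hx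
      _ = intFact (n + -(m : ℤ)) / n ! := by field_simp

theorem intFact_sub_mul_intFact_add_le {n : ℕ} {k : ℤ} (hk : k.natAbs ≤ n) :
    (intFact (n - k) * intFact (n + k) : ℝ) ≤ (k.natAbs + 1) ^ k.natAbs * n ! ^ 2 := by
  have hprod : intFact (n - k) * intFact (n + k) = (n + k.natAbs)! * (n - k.natAbs)! := by
    rw [intFact, intFact]
    rcases Int.natAbs_eq k with hk' | hk'
    · rw [show ((n : ℤ) - k).toNat = n - k.natAbs by omega,
        show ((n : ℤ) + k).toNat = n + k.natAbs by omega, mul_comm]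
    · rw [show ((n : ℤ) - k).toNat = n + k.natAbs by omega,
        show ((n : ℤ) + k).toNat = n - k.natAbs by omega]
  exact_mod_cast hprod ▸ Nat.factorial_add_mul_factorial_sub_le hk

theorem norm_sphHarm_le {n : ℕ} {k : ℤ} (hk : k.natAbs ≤ n) (θ ϕ : ℝ) :
    ‖sphHarm n k θ ϕ‖ ≤ √((2 * n + 1) / (4 * π)) * √((k.natAbs + 1) ^ k.natAbs) := by
  have hexp : ‖Complex.exp (Complex.I * k * ϕ)‖ = 1 := by
    rw [show Complex.I * k * ϕ = ((k * ϕ : ℝ) : ℂ) * Complex.I by push_cast; ring]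
    exact Complex.norm_exp_ofReal_mul_I _
  have hP := abs_assocLegendre_le n k ⟨neg_one_le_cos θ, cos_le_one θ⟩
  set a : ℝ := (intFact (n - k) : ℝ)
  set b : ℝ := (intFact (n + k) : ℝ)
  have hb : 0 < b := Nat.cast_pos.2 (Nat.factorial_pos _)
  rw [sphHarm, norm_mul, norm_mul, norm_mul, norm_zpow, norm_neg, norm_one, one_zpow, one_mul,
    hexp, mul_one, Complex.norm_real, Complex.norm_real, Real.norm_of_nonneg (Real.sqrt_nonneg _),
    Real.norm_eq_abs, Real.sqrt_mul (by positivity), mul_assoc]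
  gcongr
  calc √(a / b) * |assocLegendre n k (cos θ)| ≤ √(a / b) * (b / n !) := by gcongr
    _ = √(a * b) / n ! := by
      rw [Real.sqrt_div (by positivity), Real.sqrt_mul (by positivity)]
      field_simp
      rw [Real.sq_sqrt hb.le]
    _ ≤ √((k.natAbs + 1) ^ k.natAbs) := by
      rw [div_le_iff₀ (by positivity), ← Real.sqrt_sq (by positivity : (0 : ℝ) ≤ n !),
        ← Real.sqrt_mul (by positivity)]
      exact Real.sqrt_le_sqrt (intFact_sub_mul_intFact_add_le hk)

theorem norm_zetaC_le_one (K n : ℕ) (k : ℤ) : ‖zetaC K n k‖ ≤ 1 := by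
  unfold zetaC
  split_ifs
  · have hη : ‖etaK K‖ = 1 := by unfold etaK; split_ifs <;> simp
    have hν : ‖nuK K k‖ ≤ 1 := by unfold nuK; split_ifs <;> simp
    have hchoose :
        √(1 / 2 ^ pK K n * (pK K n).choose (((pK K n : ℤ) - k) / 2).toNat) ≤ 1 := by
      rw [Real.sqrt_le_one, one_div_mul_eq_div, div_le_one (by positivity)]
      exact_mod_cast Nat.choose_le_two_pow _ _
    rw [norm_mul, norm_mul, hη, one_mul, Complex.norm_real, Complex.norm_real,
      Real.norm_of_nonneg (Real.sqrt_nonneg _)]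
    exact mul_le_one₀ hν (Real.sqrt_nonneg _) hchoose
  · simp

noncomputable def waveletTerm (κ : ℝ → ℝ) (K N n : ℕ) (k : ℤ) (θ ϕ : ℝ) : ℂ :=
  (√((2 * n + 1) / (8 * π ^ 2)) : ℂ) * (κ (n / N) : ℂ) * zetaC K n k * sphHarm n k θ ϕ

section waveletTerm

variable {κ : ℝ → ℝ} {K N n : ℕ} {k : ℤ} {θ ϕ : ℝ}

theorem waveletTerm_eq_zero_of_le_natAbs (hk : K ≤ k.natAbs) :
    waveletTerm κ K N n k θ ϕ = 0 := by
  simp [waveletTerm, zetaC, hk.not_gt]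

theorem waveletTerm_eq_zero_of_lt (hκ : ∀ t, 2 < t → κ t = 0) (hN : 0 < N) (hn : 2 * N < n) :
    waveletTerm κ K N n k θ ϕ = 0 := by
  have h2 : 2 < (n : ℝ) / N := by
    rw [lt_div_iff₀ (by positivity)]; exact_mod_cast hn
  simp [waveletTerm, hκ _ h2]

theorem norm_waveletTerm_le {M : ℝ} (hM : ∀ t, |κ t| ≤ M) (hkn : k.natAbs ≤ n)
    (hkK : k.natAbs < K) : ‖waveletTerm κ K N n k θ ϕ‖ ≤ (2 * n + 1) * M * √(K ^ K) := by
  have hM0 : 0 ≤ M := (abs_nonneg _).trans (hM 0)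
  have hK : (k.natAbs + 1 : ℝ) ^ k.natAbs ≤ K ^ K :=
    calc (k.natAbs + 1 : ℝ) ^ k.natAbs ≤ K ^ k.natAbs := by gcongr; exact_mod_cast hkK
      _ ≤ K ^ K := pow_le_pow_right₀ (by exact_mod_cast (k.natAbs.zero_le.trans_lt hkK)) hkK.le
  have hY := norm_sphHarm_le hkn θ ϕ
  rw [waveletTerm, norm_mul, norm_mul, norm_mul, Complex.norm_real, Complex.norm_real,
    Real.norm_of_nonneg (Real.sqrt_nonneg _), Real.norm_eq_abs]
  calc √((2 * n + 1) / (8 * π ^ 2)) * |κ (n / N)| * ‖zetaC K n k‖ * ‖sphHarm n k θ ϕ‖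
      ≤ √(2 * n + 1) * M * 1 * (√(2 * n + 1) * √(K ^ K)) := by
        gcongr
        · exact div_le_self (by positivity) (by nlinarith [pi_gt_three])
        · exact hM _
        · exact norm_zetaC_le_one K n k
        · refine hY.trans ?_
          gcongr
          exact div_le_self (by positivity) (by linarith [pi_gt_three])
    _ = (2 * n + 1) * M * √(K ^ K) := by
        rw [mul_one, mul_mul_mul_comm, Real.mul_self_sqrt (by positivity)]; ring

theorem norm_sum_waveletTerm_le {M : ℝ} (hM : ∀ t, |κ t| ≤ M) :
    ‖∑ k ∈ Finset.Icc (-(n : ℤ)) n, waveletTerm κ K N n k θ ϕ‖ ≤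
      2 * K * ((2 * n + 1) * M * √(K ^ K)) := by
  have hM0 : 0 ≤ M := (abs_nonneg _).trans (hM 0)
  rw [← Finset.sum_filter_of_ne (p := fun k : ℤ => k.natAbs < K) fun k _ hk =>
    not_le.1 fun h => hk (waveletTerm_eq_zero_of_le_natAbs h)]
  have hcard : ((Finset.Icc (-(n : ℤ)) n).filter fun k => k.natAbs < K).card ≤ 2 * K := by
    calc _ ≤ (Finset.Ioo (-(K : ℤ)) K).card :=
          Finset.card_le_card fun k hk => by
            simp only [Finset.mem_filter, Finset.mem_Ioo] at hk ⊢; omega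
      _ ≤ 2 * K := by rw [Int.card_Ioo]; omega
  calc _ ≤ ∑ k ∈ (Finset.Icc (-(n : ℤ)) n).filter (fun k => k.natAbs < K),
        (2 * n + 1) * M * √(K ^ K) := by
        refine norm_sum_le_of_le _ fun k hk => ?_
        simp only [Finset.mem_filter, Finset.mem_Icc] at hk
        exact norm_waveletTerm_le hM (by omega) hk.2
    _ ≤ 2 * K * ((2 * n + 1) * M * √(K ^ K)) := by
        rw [Finset.sum_const, nsmul_eq_mul]
        gcongr
        exact_mod_cast hcard

theorem Psi_eq_sum_range (hκ : ∀ t, 2 < t → κ t = 0) (hN : 0 < N) :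
    Psi κ K N θ ϕ =
      ∑ n ∈ Finset.range (2 * N + 1), ∑ k ∈ Finset.Icc (-(n : ℤ)) n,
        waveletTerm κ K N n k θ ϕ :=
  tsum_eq_sum fun n hn => Finset.sum_eq_zero fun k _ =>
    waveletTerm_eq_zero_of_lt hκ hN (by rw [Finset.mem_range] at hn; omega)

end waveletTerm

/-- the sup-norm bound `‖Ψ_K^N‖_∞ ≤ c N²`. -/
theorem wavelet_sup_norm_bound
    (κ : ℝ → ℝ) (K : ℕ) (hK : 1 ≤ K) (hsupp : WindowSupp κ)
    (hbdd : ∃ M : ℝ, ∀ t : ℝ, |κ t| ≤ M) :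
    ∃ c > 0, ∀ N : ℕ, 1 ≤ N → ∀ y ∈ S2, ‖PsiS κ K N y‖ ≤ c * (N : ℝ) ^ 2 := by
  obtain ⟨M, hM⟩ := hbdd
  have hM0 : 0 ≤ M := (abs_nonneg _).trans (hM 0)
  have hκ (t : ℝ) (ht : 2 < t) : κ t = 0 :=
    Function.notMem_support.1 fun h => (hsupp.1 h).2.not_gt ht
  have hK0 : (0 : ℝ) < K := by exact_mod_cast hK
  refine ⟨30 * K * (M + 1) * √(K ^ K), by positivity, fun N hN y _ => ?_⟩
  have hN1 : (1 : ℝ) ≤ N := by exact_mod_cast hN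
  rw [PsiS, Psi_eq_sum_range hκ hN]
  calc _ ≤ ∑ n ∈ Finset.range (2 * N + 1), 2 * K * ((2 * n + 1) * M * √(K ^ K)) :=
        norm_sum_le_of_le _ fun n _ => norm_sum_waveletTerm_le hM
    _ ≤ ∑ n ∈ Finset.range (2 * N + 1), 2 * K * ((4 * N + 1) * M * √(K ^ K)) := by
        refine Finset.sum_le_sum fun n hn => ?_
        gcongr 2 * K * (?_ * M * _)
        have : n ≤ 2 * N := Nat.lt_succ_iff.1 (Finset.mem_range.1 hn)
        exact_mod_cast (by omega : 2 * n + 1 ≤ 4 * N + 1)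
    _ = ((2 * N + 1) * (4 * N + 1)) * (2 * K * M * √(K ^ K)) := by
        rw [Finset.sum_const, Finset.card_range, nsmul_eq_mul]; push_cast; ring
    _ ≤ (15 * N ^ 2) * (2 * K * (M + 1) * √(K ^ K)) := by
        gcongr ?_ * (2 * K * ?_ * _)
        · nlinarith
        · linarith
    _ = 30 * K * (M + 1) * √(K ^ K) * N ^ 2 := by ring
end
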